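/- Let K be a finite-dimensional real Lie algebra and ∂ : K* → K a linear map that is symmetric and K-invariant. Suppose P and Q are Lie subalgebras of K with K = P ⊕ Q, and suppose their annihilators P⁰, Q⁰ ⊆ K* satisfy γ'(∂γ) = 0 whenever γ, γ' ∈ P⁰ and whenever γ, γ' ∈ Q⁰. Then K* × K = (P⁰ × P) ⊕ (Q⁰ × Q), and each of P⁰ × P and Q⁰ × Q is Lagrangian for the pairing ⟨(γ,k),(γ',k')⟩ := (1/2)(γ(k') + γ'(k) + γ(∂γ')) and closed under the double bracket ⁅(γ,k),(γ',k')⁆ := (k·γ' − k'·γ + (∂γ)·γ', [k,k']). -/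

import Mathlib

/-!
Both summands are `W⁰ × W` for a Lie subalgebra `W` whose annihilator is `δ`-isotropic, so everything
reduces to one such `W`. Complementarity is the fact that annihilators of complementary subspaces
are complementary. Pairing with `(0, d)` and `(γ', 0)` shows that the orthogonal of `W⁰ × W` is
`W⁰ × W` itself. For the bracket, `W⁰` is stable under the coadjoint action of `W`, and invariance
of `δ` gives `(δγ)·γ' ∈ W⁰` for `γ, γ' ∈ W⁰`: evaluated at `d ∈ W` it equals `(d·γ)(δγ')`, which
vanishes by isotropy because `d·γ ∈ W⁰`.
-/

open Module

/-- The coadjoint action of `k ∈ K` on `γ ∈ K*`: `(k·γ)(x) = -γ ⁅k, x⁆`. -/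
def coad {K : Type*} [LieRing K] [LieAlgebra ℝ K] (k : K) (γ : Dual ℝ K) :
    Dual ℝ K :=
  -(γ ∘ₗ (LieAlgebra.ad ℝ K k))

/-- The double bracket on `K* × K` induced by a symmetric `K`-invariant map `δ : K* → K`. -/
def dblBracket {K : Type*} [LieRing K] [LieAlgebra ℝ K] (δ : Dual ℝ K →ₗ[ℝ] K)
    (e f : Dual ℝ K × K) : Dual ℝ K × K :=
  (coad e.2 f.1 - coad f.2 e.1 + coad (δ e.1) f.1, ⁅e.2, f.2⁆)

/-- The pairing on `K* × K`: `⟨(γ,k),(γ',k')⟩ = (1/2)(γ(k') + γ'(k) + γ(δγ'))`. -/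
noncomputable def dblPairing {K : Type*} [LieRing K] [LieAlgebra ℝ K] (δ : Dual ℝ K →ₗ[ℝ] K)
    (e f : Dual ℝ K × K) : ℝ :=
  (1 / 2) * (e.1 f.2 + f.1 e.2 + e.1 (δ f.1))

@[simp]
theorem coad_apply {K : Type*} [LieRing K] [LieAlgebra ℝ K] (k : K) (γ : Dual ℝ K) (x : K) :
    coad k γ x = -γ ⁅k, x⁆ :=
  rfl

theorem Submodule.isCompl_prod {R M N : Type*} [Semiring R] [AddCommMonoid M] [AddCommMonoid N]
    [Module R M] [Module R N] {A A' : Submodule R M} {B B' : Submodule R N}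
    (hA : IsCompl A A') (hB : IsCompl B B') : IsCompl (A.prod B) (A'.prod B') := by
  rw [isCompl_iff, disjoint_iff, codisjoint_iff, prod_inf_prod, prod_sup_prod, hA.inf_eq_bot,
    hB.inf_eq_bot, hA.sup_eq_top, hB.sup_eq_top, prod_bot, prod_top]
  exact ⟨rfl, rfl⟩

theorem LieSubalgebra.mem_toSubmodule_dualAnnihilator {R L : Type*} [CommRing R] [LieRing L]
    [LieAlgebra R L] {P : LieSubalgebra R L} {γ : Dual R L} :
    γ ∈ P.toSubmodule.dualAnnihilator ↔ ∀ d ∈ P, γ d = 0 := by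
  simp [Submodule.mem_dualAnnihilator]

section DualAnnihilatorProd

variable {K : Type*} [LieRing K] [LieAlgebra ℝ K] {δ : Dual ℝ K →ₗ[ℝ] K}

theorem dualAnnihilator_prod_eq_setOf_dblPairing_eq_zero
    (hsym : ∀ γ γ' : Dual ℝ K, γ' (δ γ) = γ (δ γ')) {W : Submodule ℝ K}
    (hW : ∀ γ ∈ W.dualAnnihilator, ∀ γ' ∈ W.dualAnnihilator, γ' (δ γ) = 0) :
    ((W.dualAnnihilator.prod W : Submodule ℝ (Dual ℝ K × K)) : Set (Dual ℝ K × K)) =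
      {e | ∀ f ∈ W.dualAnnihilator.prod W, dblPairing δ e f = 0} := by
  ext ⟨γ, k⟩
  simp only [SetLike.mem_coe, Submodule.mem_prod, Set.mem_ofPred_eq, Prod.forall]
  have hδ {γ'} (hγ : γ ∈ W.dualAnnihilator) (hγ' : γ' ∈ W.dualAnnihilator) : γ (δ γ') = 0 :=
    (hsym γ' γ).trans (hW γ hγ γ' hγ')
  constructor
  · rintro ⟨hγ, hk⟩ γ' k' ⟨hγ', hk'⟩
    have hγk' : γ k' = 0 := (Submodule.mem_dualAnnihilator _).mp hγ k' hk'
    have hγ'k : γ' k = 0 := (Submodule.mem_dualAnnihilator _).mp hγ' k hk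
    simp [dblPairing, hγk', hγ'k, hδ hγ hγ']
  · intro horth
    have hγ : γ ∈ W.dualAnnihilator := by
      rw [Submodule.mem_dualAnnihilator]
      intro d hd
      simpa [dblPairing] using horth 0 d ⟨W.dualAnnihilator.zero_mem, hd⟩
    refine ⟨hγ, (Subspace.forall_mem_dualAnnihilator_apply_eq_zero_iff W k).mp fun γ' hγ' => ?_⟩
    simpa [dblPairing, hδ hγ hγ'] using horth γ' 0 ⟨hγ', W.zero_mem⟩

variable {P : LieSubalgebra ℝ K}

theorem coad_mem_dualAnnihilator {d : K} (hd : d ∈ P) {γ : Dual ℝ K}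
    (hγ : γ ∈ P.toSubmodule.dualAnnihilator) : coad d γ ∈ P.toSubmodule.dualAnnihilator := by
  rw [Submodule.mem_dualAnnihilator] at hγ ⊢
  intro x hx
  simp [hγ _ (P.lie_mem hd hx)]

theorem coad_δ_mem_dualAnnihilator
    (hinv : ∀ (k : K) (γ γ' : Dual ℝ K), γ ⁅k, δ γ'⁆ + γ' ⁅k, δ γ⁆ = 0)
    (hP : ∀ γ ∈ P.toSubmodule.dualAnnihilator, ∀ γ' ∈ P.toSubmodule.dualAnnihilator,
      γ' (δ γ) = 0)
    {γ γ' : Dual ℝ K} (hγ : γ ∈ P.toSubmodule.dualAnnihilator)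
    (hγ' : γ' ∈ P.toSubmodule.dualAnnihilator) :
    coad (δ γ) γ' ∈ P.toSubmodule.dualAnnihilator := by
  rw [Submodule.mem_dualAnnihilator]
  intro d hd
  have hvanish : coad d γ (δ γ') = 0 := hP γ' hγ' _ (coad_mem_dualAnnihilator hd hγ)
  have := hinv d γ γ'
  rw [coad_apply] at hvanish ⊢
  rw [← lie_skew, map_neg]
  linarith

theorem dblBracket_mem_dualAnnihilator_prod
    (hinv : ∀ (k : K) (γ γ' : Dual ℝ K), γ ⁅k, δ γ'⁆ + γ' ⁅k, δ γ⁆ = 0)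
    (hP : ∀ γ ∈ P.toSubmodule.dualAnnihilator, ∀ γ' ∈ P.toSubmodule.dualAnnihilator,
      γ' (δ γ) = 0)
    {e f : Dual ℝ K × K} (he : e ∈ P.toSubmodule.dualAnnihilator.prod P.toSubmodule)
    (hf : f ∈ P.toSubmodule.dualAnnihilator.prod P.toSubmodule) :
    dblBracket δ e f ∈ P.toSubmodule.dualAnnihilator.prod P.toSubmodule := by
  obtain ⟨hγ, hk⟩ := he
  obtain ⟨hγ', hk'⟩ := hf
  refine ⟨?_, P.lie_mem hk hk'⟩
  exact Submodule.add_mem _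
    (Submodule.sub_mem _ (coad_mem_dualAnnihilator hk hγ') (coad_mem_dualAnnihilator hk' hγ))
    (coad_δ_mem_dualAnnihilator hinv hP hγ hγ')

end DualAnnihilatorProd

theorem stmt11_general {K : Type*} [LieRing K] [LieAlgebra ℝ K]
    (δ : Dual ℝ K →ₗ[ℝ] K)
    (hsym : ∀ γ γ' : Dual ℝ K, γ' (δ γ) = γ (δ γ'))
    (hinv : ∀ (k : K) (γ γ' : Dual ℝ K), γ ⁅k, δ γ'⁆ + γ' ⁅k, δ γ⁆ = 0)
    (P Q : LieSubalgebra ℝ K)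
    (hcompl : IsCompl P.toSubmodule Q.toSubmodule)
    (hP : ∀ γ ∈ {γ : Dual ℝ K | ∀ d ∈ P, γ d = 0},
          ∀ γ' ∈ {γ : Dual ℝ K | ∀ d ∈ P, γ d = 0}, γ' (δ γ) = 0)
    (hQ : ∀ γ ∈ {γ : Dual ℝ K | ∀ d ∈ Q, γ d = 0},
          ∀ γ' ∈ {γ : Dual ℝ K | ∀ d ∈ Q, γ d = 0}, γ' (δ γ) = 0) :
    -- LP := P⁰ × P, LQ := Q⁰ × Q
    let LP : Submodule ℝ (Dual ℝ K × K) :=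
      (P.toSubmodule.dualAnnihilator).prod P.toSubmodule
    let LQ : Submodule ℝ (Dual ℝ K × K) :=
      (Q.toSubmodule.dualAnnihilator).prod Q.toSubmodule
    -- K* × K = LP ⊕ LQ
    IsCompl LP LQ ∧
    -- LP and LQ are Lagrangian for the pairing
    ((LP : Set (Dual ℝ K × K)) = {e | ∀ f ∈ LP, dblPairing δ e f = 0}) ∧
    ((LQ : Set (Dual ℝ K × K)) = {e | ∀ f ∈ LQ, dblPairing δ e f = 0}) ∧
    -- LP and LQ are closed under the double bracket
    (∀ e ∈ LP, ∀ f ∈ LP, dblBracket δ e f ∈ LP) ∧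
    (∀ e ∈ LQ, ∀ f ∈ LQ, dblBracket δ e f ∈ LQ) := by
  have isotropic {W : LieSubalgebra ℝ K}
      (hW : ∀ γ ∈ {γ : Dual ℝ K | ∀ d ∈ W, γ d = 0},
        ∀ γ' ∈ {γ : Dual ℝ K | ∀ d ∈ W, γ d = 0}, γ' (δ γ) = 0) :
      ∀ γ ∈ W.toSubmodule.dualAnnihilator, ∀ γ' ∈ W.toSubmodule.dualAnnihilator,
        γ' (δ γ) = 0 :=
    fun γ hγ γ' hγ' => hW γ (LieSubalgebra.mem_toSubmodule_dualAnnihilator.mp hγ) γ'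
      (LieSubalgebra.mem_toSubmodule_dualAnnihilator.mp hγ')
  exact ⟨Submodule.isCompl_prod (Subspace.isCompl_dualAnnihilator hcompl) hcompl,
    dualAnnihilator_prod_eq_setOf_dblPairing_eq_zero hsym (isotropic hP),
    dualAnnihilator_prod_eq_setOf_dblPairing_eq_zero hsym (isotropic hQ),
    fun _ he _ hf => dblBracket_mem_dualAnnihilator_prod hinv (isotropic hP) he hf,
    fun _ he _ hf => dblBracket_mem_dualAnnihilator_prod hinv (isotropic hQ) he hf⟩

theorem stmt11 {K : Type*} [LieRing K] [LieAlgebra ℝ K] [FiniteDimensional ℝ K]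
    (δ : Dual ℝ K →ₗ[ℝ] K)
    (hsym : ∀ γ γ' : Dual ℝ K, γ' (δ γ) = γ (δ γ'))
    (hinv : ∀ (k : K) (γ γ' : Dual ℝ K), γ ⁅k, δ γ'⁆ + γ' ⁅k, δ γ⁆ = 0)
    (P Q : LieSubalgebra ℝ K)
    (hcompl : IsCompl P.toSubmodule Q.toSubmodule)
    (hP : ∀ γ ∈ {γ : Dual ℝ K | ∀ d ∈ P, γ d = 0},
          ∀ γ' ∈ {γ : Dual ℝ K | ∀ d ∈ P, γ d = 0}, γ' (δ γ) = 0)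
    (hQ : ∀ γ ∈ {γ : Dual ℝ K | ∀ d ∈ Q, γ d = 0},
          ∀ γ' ∈ {γ : Dual ℝ K | ∀ d ∈ Q, γ d = 0}, γ' (δ γ) = 0) :
    -- LP := P⁰ × P, LQ := Q⁰ × Q
    let LP : Submodule ℝ (Dual ℝ K × K) :=
      (P.toSubmodule.dualAnnihilator).prod P.toSubmodule
    let LQ : Submodule ℝ (Dual ℝ K × K) :=
      (Q.toSubmodule.dualAnnihilator).prod Q.toSubmodule
    -- K* × K = LP ⊕ LQ
    IsCompl LP LQ ∧
    -- LP and LQ are Lagrangian for the pairing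
    ((LP : Set (Dual ℝ K × K)) = {e | ∀ f ∈ LP, dblPairing δ e f = 0}) ∧
    ((LQ : Set (Dual ℝ K × K)) = {e | ∀ f ∈ LQ, dblPairing δ e f = 0}) ∧
    -- LP and LQ are closed under the double bracket
    (∀ e ∈ LP, ∀ f ∈ LP, dblBracket δ e f ∈ LP) ∧
    (∀ e ∈ LQ, ∀ f ∈ LQ, dblBracket δ e f ∈ LQ) :=
  stmt11_general δ hsym hinv P Q hcompl hP hQ
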